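/- Let α > 0, β > 0, C > 0 and set T = 2C·(1/α + 1/β). Define Ã₁ : [0, T] → ℝ by Ã₁(t) = α·t for t ∈ [0, 2C/α) and Ã₁(t) = 4C√β · f(2C, 0, t − 2C/α) for t ∈ [2C/α, T]. Then (1/T)·∫₀ᵀ Ã₁(u) du = (β/(α+β))·C + (αβ/(2C(α+β)))·log( 1 + (2√(2π)/√β)·C·e^{C²/(2β)}·Erf(C/√(2β)) ). -/

import Mathlib

/-- The error function `Erf x = (2/√π)·∫₀ˣ e^{−u²} du`. -/
noncomputable def Erf (x : ℝ) : ℝ :=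
  (2 / Real.sqrt Real.pi) * ∫ u in (0:ℝ)..x, Real.exp (-u ^ 2)

/-- `f(a,b,t)` from the SQF limit-cycle analysis (for parameters `β`, `C`). -/
noncomputable def f (β C a b t : ℝ) : ℝ :=
  Real.exp (-(t / 2) * (2 * b - 2 * C + β * t)) /
    (2 * Real.sqrt β +
      a * Real.exp ((b - C) ^ 2 / (2 * β)) * Real.sqrt (2 * Real.pi) *
        (Erf ((b - C + β * t) / Real.sqrt (2 * β)) -
         Erf ((b - C) / Real.sqrt (2 * β))))

/-! The rate `2a√β·f(a,b,t)` is the logarithmic derivative of the denominator of `f`: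
differentiating `Erf((b-C+βt)/√(2β))` produces `e^{-(b-C+βt)²/(2β)}`, and the prefactor
`e^{(b-C)²/(2β)}` turns this into the numerator `e^{-(t/2)(2b-2C+βt)}` of `f`. So the loss phase
contributes the logarithm of the ratio of that denominator at its end and at its start, the linear
phase contributes `α(2C/α)²/2 = 2C²/α`, and dividing the sum by `T` gives the formula. -/
open Real Set MeasureTheory intervalIntegral

lemma hasDerivAt_Erf (x : ℝ) : HasDerivAt Erf (2 / √π * exp (-x ^ 2)) x :=
  ((by fun_prop : Continuous fun u : ℝ => exp (-u ^ 2)).integral_hasStrictDerivAt 0 x)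
    |>.hasDerivAt.const_mul _

lemma monotone_Erf : Monotone Erf :=
  monotone_of_hasDerivAt_nonneg hasDerivAt_Erf fun x => by positivity

@[simp]
lemma Erf_neg (x : ℝ) : Erf (-x) = -Erf x := by
  have h := integral_comp_neg (a := 0) (b := x) fun u : ℝ => exp (-u ^ 2)
  simp only [neg_sq, neg_zero] at h
  rw [Erf, Erf, h, integral_symm]
  ring

section fDenom

variable (β C a b : ℝ)

noncomputable def fDenom (t : ℝ) : ℝ :=
  2 * √β + a * exp ((b - C) ^ 2 / (2 * β)) * √(2 * π) *
    (Erf ((b - C + β * t) / √(2 * β)) - Erf ((b - C) / √(2 * β)))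

lemma f_eq_div (t : ℝ) :
    f β C a b t = exp (-(t / 2) * (2 * b - 2 * C + β * t)) / fDenom β C a b t := rfl

@[simp]
lemma fDenom_zero : fDenom β C a b 0 = 2 * √β := by simp [fDenom]

lemma hasDerivAt_fDenom (hβ : 0 < β) (t : ℝ) :
    HasDerivAt (fDenom β C a b) (2 * a * √β * exp (-(t / 2) * (2 * b - 2 * C + β * t))) t := by
  have hinner : HasDerivAt (fun s => (b - C + β * s) / √(2 * β)) (β / √(2 * β)) t := by
    simpa using (((hasDerivAt_id t).const_mul β).const_add (b - C)).div_const (√(2 * β))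
  have h : HasDerivAt (fDenom β C a b) (a * exp ((b - C) ^ 2 / (2 * β)) * √(2 * π) *
      (2 / √π * exp (-((b - C + β * t) / √(2 * β)) ^ 2) * (β / √(2 * β)))) t :=
    ((((hasDerivAt_Erf _).comp t hinner).sub_const _).const_mul _).const_add _
  convert h using 1
  have hexp : exp ((b - C) ^ 2 / (2 * β)) * exp (-((b - C + β * t) / √(2 * β)) ^ 2) =
      exp (-(t / 2) * (2 * b - 2 * C + β * t)) := by
    rw [← exp_add, div_pow, sq_sqrt (by positivity)]
    congr 1
    field_simp
    ring
  have hconst : √(2 * π) * (2 / √π) * (β / √(2 * β)) = 2 * √β := by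
    rw [sqrt_mul zero_le_two, sqrt_mul zero_le_two]
    have := sqrt_pos.2 pi_pos
    have := sqrt_pos.2 hβ
    field_simp
    rw [sq_sqrt hβ.le]
  linear_combination (-a * rexp (-(t / 2) * (2 * b - 2 * C + β * t))) * hconst -
    a * (√(2 * π) * (2 / √π) * (β / √(2 * β))) * hexp

lemma continuous_fDenom (hβ : 0 < β) : Continuous (fDenom β C a b) :=
  continuous_iff_continuousAt.2 fun t => (hasDerivAt_fDenom β C a b hβ t).continuousAt

lemma fDenom_pos (hβ : 0 < β) (ha : 0 ≤ a) {t : ℝ} (ht : 0 ≤ t) :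
    0 < fDenom β C a b t := by
  have hErf : Erf ((b - C) / √(2 * β)) ≤ Erf ((b - C + β * t) / √(2 * β)) :=
    monotone_Erf (div_le_div_of_nonneg_right (by nlinarith) (sqrt_nonneg _))
  have hincr : 0 ≤ a * exp ((b - C) ^ 2 / (2 * β)) * √(2 * π) *
      (Erf ((b - C + β * t) / √(2 * β)) - Erf ((b - C) / √(2 * β))) :=
    mul_nonneg (by positivity) (sub_nonneg.2 hErf)
  have : 0 < 2 * √β := by positivity
  unfold fDenom
  linarith

lemma continuousOn_f (hβ : 0 < β) (ha : 0 ≤ a) : ContinuousOn (f β C a b) (Ici 0) := by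
  change ContinuousOn (fun t => exp (-(t / 2) * (2 * b - 2 * C + β * t)) / fDenom β C a b t) _
  refine ContinuousOn.div (by fun_prop) (continuous_fDenom β C a b hβ).continuousOn ?_
  exact fun t ht => (fDenom_pos β C a b hβ ha ht).ne'

lemma integral_f (hβ : 0 < β) (ha : 0 ≤ a) {d : ℝ} (hd : 0 ≤ d) :
    ∫ t in 0..d, 2 * a * √β * f β C a b t = log (fDenom β C a b d / (2 * √β)) := by
  have hnonneg : ∀ t ∈ uIcc 0 d, 0 ≤ t := fun t ht => (uIcc_of_le hd ▸ ht).1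
  have hderiv : ∀ t ∈ uIcc 0 d,
      HasDerivAt (fun s => log (fDenom β C a b s)) (2 * a * √β * f β C a b t) t := by
    intro t ht
    rw [f_eq_div, ← mul_div_assoc]
    exact (hasDerivAt_fDenom β C a b hβ t).log (fDenom_pos β C a b hβ ha (hnonneg t ht)).ne'
  have hint : IntervalIntegrable (fun t => 2 * a * √β * f β C a b t) volume 0 d :=
    ((continuousOn_f β C a b hβ ha).mono hnonneg).intervalIntegrable.const_mul _
  rw [integral_eq_sub_of_hasDerivAt hderiv hint, fDenom_zero,
    log_div (fDenom_pos β C a b hβ ha hd).ne' (by positivity)]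

lemma fDenom_sqf_end (hβ : 0 < β) :
    fDenom β C (2 * C) 0 (2 * C / β) / (2 * √β) =
      1 + (2 * √(2 * π) / √β) * C * exp (C ^ 2 / (2 * β)) * Erf (C / √(2 * β)) := by
  have hC : 0 - C + β * (2 * C / β) = C := by field_simp; ring
  have : 0 < √β := sqrt_pos.2 hβ
  rw [fDenom, hC, zero_sub, neg_div, Erf_neg, neg_sq]
  field_simp
  ring

end fDenom

/-- Mean stationary sending rate of flow 1 over the SQF limit cycle of period
`T = 2C(1/α + 1/β)`: the rate is `αt` during the ON phase `[0, 2C/α)` and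
`4C√β·f(2C,0,t − 2C/α)` during the loss phase `[2C/α, T]`. -/
theorem sqf_mean_sending_rate (α β C : ℝ) (hα : 0 < α) (hβ : 0 < β) (hC : 0 < C)
    (T : ℝ) (hT : T = 2 * C * (1 / α + 1 / β)) (A₁ : ℝ → ℝ)
    (hA₁on : ∀ t ∈ Set.Ico (0 : ℝ) (2 * C / α), A₁ t = α * t)
    (hA₁off : ∀ t ∈ Set.Icc (2 * C / α) T,
      A₁ t = 4 * C * Real.sqrt β * f β C (2 * C) 0 (t - 2 * C / α)) :
    (1 / T) * ∫ u in (0:ℝ)..T, A₁ u =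
      (β / (α + β)) * C +
        (α * β / (2 * C * (α + β))) *
          Real.log (1 + (2 * Real.sqrt (2 * Real.pi) / Real.sqrt β) * C *
            Real.exp (C ^ 2 / (2 * β)) * Erf (C / Real.sqrt (2 * β))) := by
  set a := 2 * C / α with ha_def
  have ha : 0 ≤ a := by positivity
  have hTa : T - a = 2 * C / β := by rw [hT, ha_def]; field_simp; ring
  have haT : a ≤ T := by linarith [hTa ▸ (by positivity : 0 ≤ 2 * C / β)]
  have hon : EqOn A₁ (fun t => α * t) (uIoo 0 a) := fun t ht =>
    hA₁on t (Ioo_subset_Ico_self (uIoo_of_le ha ▸ ht))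
  have hoff : EqOn A₁ (fun t => 2 * (2 * C) * √β * f β C (2 * C) 0 (t - a)) (uIcc a T) :=
    fun t ht => by rw [hA₁off t (uIcc_of_le haT ▸ ht)]; ring
  have hint_on : IntervalIntegrable A₁ volume 0 a :=
    ((continuous_const.mul continuous_id).intervalIntegrable _ _).congr_uIoo hon.symm
  have hint_off : IntervalIntegrable A₁ volume a T := by
    have hshift : MapsTo (· - a) (uIcc a T) (Ici 0) := fun t ht =>
      sub_nonneg.2 (uIcc_of_le haT ▸ ht).1
    exact ((((continuousOn_f β C (2 * C) 0 hβ (by positivity)).comp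
      (continuous_sub_right a).continuousOn hshift).const_mul _).congr hoff).intervalIntegrable
  rw [← integral_add_adjacent_intervals hint_on hint_off, integral_congr_uIoo hon,
    integral_congr hoff, integral_comp_sub_right (2 * (2 * C) * √β * f β C (2 * C) 0 ·),
    sub_self, hTa, integral_f β C (2 * C) 0 hβ (by positivity) (by positivity),
    fDenom_sqf_end β C hβ, intervalIntegral.integral_const_mul, integral_id, hT, ha_def]
  field_simp
  ring
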